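/- arXiv:2306.09471 — 2 statements merged into one kernel-verified Lean document; each statement's English description precedes it below -/
import Mathlib

section
/- Let S : D → ℝ^m be a statistic and let Δ be an upper bound on ‖S(d) − S(d')‖₁ over all pairs of adjacent datasets d, d' (differing in one element), with Δ ∈ (0,∞). Then the randomized algorithm A(d) = S(d) + (ζ₁,…,ζ_m), where each ζᵢ is drawn independently from the Laplace distribution with scale Δ/ε, satisfies ε-differential privacy: for all adjacent d, d' and all measurable events O ⊆ ℝ^m, P(A(d) ∈ O) ≤ exp(ε)·P(A(d') ∈ O). -/
/-
If `p` is the Laplace density of scale `λ`, the triangle inequality gives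
`p (x - a) ≤ exp (|a - b| / λ) * p (x - b)`, so the law of `a + ζ` is dominated by
`exp (|a - b| / λ)` times the law of `b + ζ`. Domination passes to product measures with the
product of the constants, which for the two noisy releases is `exp (‖S d - S d'‖₁ / λ) ≤ exp ε`.
-/

open MeasureTheory Real

/-- Laplace distribution with scale `lam`. -/
noncomputable def laplaceMeasure (lam : ℝ) : Measure ℝ :=
  volume.withDensity (fun x => ENNReal.ofReal ((1 / (2 * lam)) * Real.exp (-|x| / lam)))

/-- `ε`-differential privacy for a randomized algorithm `A` (given as a kernel of
measures) with respect to an adjacency relation `adj` on datasets. -/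
def DiffPrivate {D Ω : Type*} [MeasurableSpace Ω] (adj : D → D → Prop)
    (A : D → Measure Ω) (ε : ℝ) : Prop :=
  ∀ d d', adj d d' → ∀ O : Set Ω, MeasurableSet O →
    A d O ≤ ENNReal.ofReal (Real.exp ε) * A d' O

open scoped ENNReal NNReal

theorem Real.exp_neg_abs_sub_div_le (x a b lam : ℝ) (hlam : 0 ≤ lam) :
    exp (-|x - a| / lam) ≤ exp (|a - b| / lam) * exp (-|x - b| / lam) := by
  rw [← exp_add, exp_le_exp, ← add_div]
  exact div_le_div_of_nonneg_right (by linarith [abs_sub_le x a b]) hlam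

namespace MeasureTheory.Measure

variable {ι : Type*} [Fintype ι] {α : ι → Type*} [∀ i, MeasurableSpace (α i)]

theorem pi_mono {μ ν : ∀ i, Measure (α i)} (h : ∀ i, μ i ≤ ν i) :
    Measure.pi μ ≤ Measure.pi ν := by
  refine le_iff.2 fun s hs => ?_
  rw [pi_def, pi_def, toMeasure_apply _ _ hs, toMeasure_apply _ _ hs]
  exact OuterMeasure.le_pi.2 (fun t _ => (OuterMeasure.pi_pi_le _ t).trans
    (Finset.prod_le_prod' fun i _ => h i (t i))) s

theorem pi_smul (μ : ∀ i, Measure (α i)) [∀ i, SigmaFinite (μ i)] (c : ι → ℝ≥0) :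
    Measure.pi (fun i => c i • μ i) = (∏ i, c i) • Measure.pi μ := by
  refine pi_eq fun s hs => ?_
  simp only [smul_apply, pi_pi, ENNReal.smul_def, smul_eq_mul, ENNReal.ofNNReal_finsetProd,
    Finset.prod_mul_distrib]

theorem map_add_left_withDensity {G : Type*} [MeasurableSpace G] [AddGroup G] [MeasurableAdd G]
    (μ : Measure G) [μ.IsAddLeftInvariant] (ρ : G → ℝ≥0∞) (a : G) :
    (μ.withDensity ρ).map (a + ·) = μ.withDensity (fun x => ρ (-a + x)) := by
  ext s hs
  rw [map_apply (measurable_const_add a) hs, withDensity_apply _ (measurable_const_add a hs),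
    withDensity_apply _ hs]
  simpa using (measurePreserving_add_left μ a).setLIntegral_comp_preimage_emb
    (measurableEmbedding_addLeft a) (fun x => ρ (-a + x)) s

end MeasureTheory.Measure

open MeasureTheory.Measure

instance sigmaFinite_laplaceMeasure (lam : ℝ) : SigmaFinite (laplaceMeasure lam) := by
  unfold laplaceMeasure; infer_instance

theorem laplaceMeasure_map_add_le_smul (lam : ℝ) (hlam : 0 ≤ lam) (a b : ℝ) :
    (laplaceMeasure lam).map (a + ·)
      ≤ (exp (|a - b| / lam)).toNNReal • (laplaceMeasure lam).map (b + ·) := by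
  rw [laplaceMeasure, map_add_left_withDensity, map_add_left_withDensity, ENNReal.smul_def,
    ← withDensity_smul' _ _ ENNReal.coe_ne_top]
  refine withDensity_mono (ae_of_all _ fun x => ?_)
  simp only [Pi.smul_apply, smul_eq_mul, neg_add_eq_sub]
  refine (ENNReal.ofReal_le_ofReal ?_).trans_eq (ENNReal.ofReal_mul (exp_pos _).le)
  rw [mul_left_comm]
  exact mul_le_mul_of_nonneg_left (exp_neg_abs_sub_div_le x a b lam hlam) (by positivity)

/-- Laplace mechanism: if `Δ ∈ (0,∞)` bounds the ℓ¹-sensitivity of the statistic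
`S : D → ℝ^m` over adjacent datasets, then adding independent Laplace(Δ/ε) noise to
each coordinate of `S` is `ε`-differentially private. -/
theorem laplace_mechanism {D : Type*} (m : ℕ) (adj : D → D → Prop)
    (S : D → (Fin m → ℝ)) (Δ ε : ℝ) (hΔ : 0 < Δ) (hε : 0 < ε)
    (hsens : ∀ d d', adj d d' → ∑ i, |S d i - S d' i| ≤ Δ) :
    DiffPrivate adj
      (fun d => (Measure.pi (fun _ : Fin m => laplaceMeasure (Δ / ε))).map
        (fun ζ => S d + ζ)) ε := by
  intro d d' hadj O hO
  dsimp only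
  have hlam : 0 < Δ / ε := div_pos hΔ hε
  have (c : ℝ) : SigmaFinite ((laplaceMeasure (Δ / ε)).map (c + ·)) :=
    (measurableEmbedding_addLeft c).sigmaFinite_map
  have translate (c : Fin m → ℝ) : (Measure.pi fun _ : Fin m => laplaceMeasure (Δ / ε)).map
      (fun ζ => c + ζ) = Measure.pi fun i => (laplaceMeasure (Δ / ε)).map (c i + ·) :=
    pi_map_pi fun i => (measurable_const_add (c i)).aemeasurable
  have budget : ∑ i, |S d i - S d' i| / (Δ / ε) ≤ ε := by
    rw [← Finset.sum_div, div_le_iff₀ hlam, mul_div_cancel₀ _ hε.ne']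
    exact hsens d d' hadj
  calc _ = Measure.pi (fun i => (laplaceMeasure (Δ / ε)).map (S d i + ·)) O := by
        rw [← translate]
    _ ≤ Measure.pi (fun i => (exp (|S d i - S d' i| / (Δ / ε))).toNNReal •
          (laplaceMeasure (Δ / ε)).map (S d' i + ·)) O :=
        pi_mono (fun i => laplaceMeasure_map_add_le_smul _ hlam.le _ _) O
    _ = ENNReal.ofReal (exp (∑ i, |S d i - S d' i| / (Δ / ε))) *
          Measure.pi (fun i => (laplaceMeasure (Δ / ε)).map (S d' i + ·)) O := by
        rw [pi_smul, exp_sum, ← Real.toNNReal_prod_of_nonneg fun i _ => (exp_pos _).le]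
        rfl
    _ ≤ _ := by
        rw [translate]
        gcongr
end

section
/- Let η₁, η₂ be independent Laplace random variables each with scale T/ε (ε > 0, T ≥ 1). For any α ≥ 0, P(η₂ − η₁ ≥ α) = exp(−εα/T)·(εα/T + 2)/4. -/
/-!
Conditioning on `η₁ = x`, the probability is `∫ f x * G (α + x) dx`, where `f` is the Laplace
density of scale `λ = T/ε` and `G t = P(η ≥ t)` its tail: `exp (-t/λ) / 2` for `t ≥ 0` and
`1 - exp (t/λ) / 2` for `t < 0`. Cutting the line at `-α` and `0`, the integrand is a
combination of exponentials on each piece, and the three pieces contribute `3/8`, `α/(4λ)`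
and `1/8` times `exp (-α/λ)`.
-/

open MeasureTheory ProbabilityTheory Real

open Set

noncomputable def laplacePDF (lam x : ℝ) : ℝ := 1 / (2 * lam) * exp (-|x| / lam)

noncomputable def laplaceTail (lam t : ℝ) : ℝ :=
  if 0 ≤ t then exp (-t / lam) / 2 else 1 - exp (t / lam) / 2

lemma prod_setOf_le_sub_eq_lintegral_Ici (μ ν : Measure ℝ) [SFinite ν] (α : ℝ) :
    (μ.prod ν) {p : ℝ × ℝ | α ≤ p.2 - p.1} = ∫⁻ x, ν (Ici (α + x)) ∂μ := by
  rw [Measure.prod_apply (measurableSet_le measurable_const (by fun_prop))]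
  congr! with x
  ext y
  simp only [mem_preimage, mem_ofPred_eq, mem_Ici, le_sub_iff_add_le]

lemma laplaceMeasure_eq_withDensity (lam : ℝ) :
    laplaceMeasure lam = volume.withDensity fun x => ENNReal.ofReal (laplacePDF lam x) :=
  rfl

instance (lam : ℝ) : SFinite (laplaceMeasure lam) := by
  rw [laplaceMeasure_eq_withDensity]; infer_instance

lemma measurable_laplacePDF (lam : ℝ) : Measurable (laplacePDF lam) := by
  unfold laplacePDF; fun_prop

lemma measurable_laplaceTail (lam : ℝ) : Measurable (laplaceTail lam) := by
  unfold laplaceTail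
  exact Measurable.ite (measurableSet_le measurable_const measurable_id) (by fun_prop)
    (by fun_prop)

section

variable {lam : ℝ}

lemma laplacePDF_nonneg (hl : 0 < lam) (x : ℝ) : 0 ≤ laplacePDF lam x := by
  unfold laplacePDF; positivity

lemma laplacePDF_of_nonpos {x : ℝ} (hx : x ≤ 0) :
    laplacePDF lam x = 1 / (2 * lam) * exp (lam⁻¹ * x) := by
  rw [laplacePDF, abs_of_nonpos hx, neg_neg, div_eq_inv_mul x]

lemma laplacePDF_of_nonneg {x : ℝ} (hx : 0 ≤ x) :
    laplacePDF lam x = 1 / (2 * lam) * exp (-lam⁻¹ * x) := by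
  rw [laplacePDF, abs_of_nonneg hx, div_eq_inv_mul (-x), neg_mul_comm]

lemma integral_laplacePDF_Iic (hl : 0 < lam) {t : ℝ} (ht : t ≤ 0) :
    ∫ x in Iic t, laplacePDF lam x = exp (t / lam) / 2 := by
  rw [setIntegral_congr_fun measurableSet_Iic fun x hx => laplacePDF_of_nonpos (le_trans hx ht),
    integral_const_mul, integral_exp_mul_Iic (inv_pos.2 hl)]
  field_simp

lemma integral_laplacePDF_Ici (hl : 0 < lam) {t : ℝ} (ht : 0 ≤ t) :
    ∫ x in Ici t, laplacePDF lam x = exp (-t / lam) / 2 := by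
  rw [setIntegral_congr_fun measurableSet_Ici fun x hx => laplacePDF_of_nonneg (ht.trans hx),
    integral_const_mul, integral_Ici_eq_integral_Ioi,
    integral_exp_mul_Ioi (neg_neg_of_pos (inv_pos.2 hl))]
  field_simp

lemma integrable_laplacePDF (hl : 0 < lam) : Integrable (laplacePDF lam) := by
  have hneg : IntegrableOn (laplacePDF lam) (Iic 0) :=
    IntegrableOn.congr_fun ((integrableOn_exp_mul_Iic (inv_pos.2 hl) 0).const_mul _)
      (fun x hx => (laplacePDF_of_nonpos hx).symm) measurableSet_Iic
  have hpos : IntegrableOn (laplacePDF lam) (Ioi 0) :=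
    IntegrableOn.congr_fun
      ((integrableOn_exp_mul_Ioi (neg_neg_of_pos (inv_pos.2 hl)) 0).const_mul _)
      (fun x hx => (laplacePDF_of_nonneg (le_of_lt hx)).symm) measurableSet_Ioi
  rw [← integrableOn_univ, ← Iic_union_Ioi (a := (0 : ℝ))]
  exact hneg.union hpos

lemma integral_laplacePDF (hl : 0 < lam) : ∫ x, laplacePDF lam x = 1 := by
  rw [← intervalIntegral.integral_Iic_add_Ioi (b := 0) (integrable_laplacePDF hl).integrableOn
    (integrable_laplacePDF hl).integrableOn, ← integral_Ici_eq_integral_Ioi,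
    integral_laplacePDF_Iic hl le_rfl, integral_laplacePDF_Ici hl le_rfl]
  norm_num

lemma integral_laplacePDF_Ici_eq_laplaceTail (hl : 0 < lam) (t : ℝ) :
    ∫ x in Ici t, laplacePDF lam x = laplaceTail lam t := by
  unfold laplaceTail
  split_ifs with ht
  · exact integral_laplacePDF_Ici hl ht
  · have hsplit := intervalIntegral.integral_Iio_add_Ici (b := t)
      (integrable_laplacePDF hl).integrableOn (integrable_laplacePDF hl).integrableOn
    rw [integral_laplacePDF hl, ← integral_Iic_eq_integral_Iio,
      integral_laplacePDF_Iic hl (le_of_not_ge ht)] at hsplit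
    linarith

lemma laplaceTail_nonneg (hl : 0 < lam) (t : ℝ) : 0 ≤ laplaceTail lam t := by
  rw [← integral_laplacePDF_Ici_eq_laplaceTail hl]
  exact setIntegral_nonneg measurableSet_Ici fun x _ => laplacePDF_nonneg hl x

lemma laplaceTail_le_one (hl : 0 < lam) (t : ℝ) : laplaceTail lam t ≤ 1 := by
  rw [← integral_laplacePDF_Ici_eq_laplaceTail hl, ← integral_laplacePDF hl]
  exact setIntegral_le_integral (integrable_laplacePDF hl) (ae_of_all _ (laplacePDF_nonneg hl))

lemma laplaceMeasure_Ici (hl : 0 < lam) (t : ℝ) :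
    laplaceMeasure lam (Ici t) = ENNReal.ofReal (laplaceTail lam t) := by
  rw [laplaceMeasure_eq_withDensity, withDensity_apply _ measurableSet_Ici,
    ← integral_laplacePDF_Ici_eq_laplaceTail hl, ofReal_integral_eq_lintegral_ofReal
      (integrable_laplacePDF hl).integrableOn (ae_of_all _ (laplacePDF_nonneg hl))]

lemma integrable_laplacePDF_mul_laplaceTail_add (hl : 0 < lam) (α : ℝ) :
    Integrable fun x => laplacePDF lam x * laplaceTail lam (α + x) := by
  refine (integrable_laplacePDF hl).mul_bdd (c := 1)
    ((measurable_laplaceTail lam).comp (measurable_const_add α)).aestronglyMeasurable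
    (ae_of_all _ fun x => ?_)
  rw [Real.norm_of_nonneg (laplaceTail_nonneg hl _)]
  exact laplaceTail_le_one hl _

variable {α : ℝ}

lemma integral_Iio_laplacePDF_mul_laplaceTail_add (hl : 0 < lam) (hα : 0 ≤ α) :
    ∫ x in Iio (-α), laplacePDF lam x * laplaceTail lam (α + x) = 3 / 8 * exp (-(α / lam)) := by
  have hpiece : ∀ x ∈ Iio (-α), laplacePDF lam x * laplaceTail lam (α + x) =
      1 / (2 * lam) * exp (lam⁻¹ * x) - exp (α / lam) / (4 * lam) * exp (2 * lam⁻¹ * x) := by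
    intro x (hx : x < -α)
    have hexp : exp (lam⁻¹ * x) * exp ((α + x) / lam) = exp (α / lam) * exp (2 * lam⁻¹ * x) := by
      rw [← exp_add, ← exp_add]; ring_nf
    rw [laplacePDF_of_nonpos (by linarith), laplaceTail, if_neg (by linarith)]
    linear_combination (-1 / (4 * lam)) * hexp
  have hexp₁ : exp (lam⁻¹ * -α) = exp (-(α / lam)) := by ring_nf
  have hexp₂ : exp (α / lam) * exp (2 * lam⁻¹ * -α) = exp (-(α / lam)) := by
    rw [← exp_add]; ring_nf
  rw [setIntegral_congr_fun measurableSet_Iio hpiece, ← integral_Iic_eq_integral_Iio,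
    integral_sub ((integrableOn_exp_mul_Iic (inv_pos.2 hl) _).const_mul _)
      ((integrableOn_exp_mul_Iic (by positivity) _).const_mul _),
    integral_const_mul, integral_const_mul, integral_exp_mul_Iic (inv_pos.2 hl),
    integral_exp_mul_Iic (by positivity), hexp₁, div_mul_div_comm (exp (α / lam)), hexp₂]
  field_simp
  ring

lemma integral_Ico_laplacePDF_mul_laplaceTail_add (hl : 0 < lam) (hα : 0 ≤ α) :
    ∫ x in Ico (-α) 0, laplacePDF lam x * laplaceTail lam (α + x) =
      α / (4 * lam) * exp (-(α / lam)) := by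
  have hpiece : ∀ x ∈ Ico (-α) 0, laplacePDF lam x * laplaceTail lam (α + x) =
      1 / (4 * lam) * exp (-(α / lam)) := by
    rintro x ⟨hαx, hx⟩
    have hexp : exp (lam⁻¹ * x) * exp (-(α + x) / lam) = exp (-(α / lam)) := by
      rw [← exp_add]; ring_nf
    rw [laplacePDF_of_nonpos hx.le, laplaceTail, if_pos (by linarith)]
    linear_combination (1 / (4 * lam)) * hexp
  rw [setIntegral_congr_fun measurableSet_Ico hpiece, setIntegral_const,
    Real.volume_real_Ico_of_le (by linarith), smul_eq_mul]
  field_simp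
  ring

lemma integral_Ici_laplacePDF_mul_laplaceTail_add (hl : 0 < lam) (hα : 0 ≤ α) :
    ∫ x in Ici 0, laplacePDF lam x * laplaceTail lam (α + x) = 1 / 8 * exp (-(α / lam)) := by
  have hpiece : ∀ x ∈ Ici (0 : ℝ), laplacePDF lam x * laplaceTail lam (α + x) =
      exp (-(α / lam)) / (4 * lam) * exp (-(2 * lam⁻¹) * x) := by
    intro x (hx : 0 ≤ x)
    have hexp : exp (-lam⁻¹ * x) * exp (-(α + x) / lam) =
        exp (-(α / lam)) * exp (-(2 * lam⁻¹) * x) := by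
      rw [← exp_add, ← exp_add]; ring_nf
    rw [laplacePDF_of_nonneg hx, laplaceTail, if_pos (by linarith)]
    linear_combination (1 / (4 * lam)) * hexp
  rw [setIntegral_congr_fun measurableSet_Ici hpiece, integral_const_mul,
    integral_Ici_eq_integral_Ioi, integral_exp_mul_Ioi (by simpa using hl)]
  field_simp
  norm_num

lemma integral_laplacePDF_mul_laplaceTail_add (hl : 0 < lam) (hα : 0 ≤ α) :
    ∫ x, laplacePDF lam x * laplaceTail lam (α + x) = exp (-(α / lam)) * (α / lam + 2) / 4 := by
  have hint := integrable_laplacePDF_mul_laplaceTail_add hl α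
  rw [← intervalIntegral.integral_Iio_add_Ici (b := -α) hint.integrableOn hint.integrableOn,
    ← Ico_union_Ici_eq_Ici (neg_nonpos.2 hα),
    setIntegral_union ((Iio_disjoint_Ici le_rfl).mono_left Ico_subset_Iio_self)
      measurableSet_Ici hint.integrableOn hint.integrableOn,
    integral_Iio_laplacePDF_mul_laplaceTail_add hl hα,
    integral_Ico_laplacePDF_mul_laplaceTail_add hl hα,
    integral_Ici_laplacePDF_mul_laplaceTail_add hl hα]
  field_simp
  ring

lemma laplaceMeasure_prod_setOf_le_sub (hl : 0 < lam) (hα : 0 ≤ α) :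
    ((laplaceMeasure lam).prod (laplaceMeasure lam)) {p : ℝ × ℝ | α ≤ p.2 - p.1} =
      ENNReal.ofReal (exp (-(α / lam)) * (α / lam + 2) / 4) := by
  have hG : Measurable fun x => laplaceTail lam (α + x) :=
    (measurable_laplaceTail lam).comp (measurable_const_add α)
  rw [prod_setOf_le_sub_eq_lintegral_Ici]
  simp_rw [laplaceMeasure_Ici hl]
  rw [laplaceMeasure_eq_withDensity, lintegral_withDensity_eq_lintegral_mul _
    (measurable_laplacePDF lam).ennreal_ofReal hG.ennreal_ofReal]
  simp only [Pi.mul_apply, ← ENNReal.ofReal_mul (laplacePDF_nonneg hl _)]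
  rw [← ofReal_integral_eq_lintegral_ofReal (integrable_laplacePDF_mul_laplaceTail_add hl α)
      (ae_of_all _ fun x => mul_nonneg (laplacePDF_nonneg hl x) (laplaceTail_nonneg hl _)),
    integral_laplacePDF_mul_laplaceTail_add hl hα]

end

/-- If `η₁`, `η₂` are independent Laplace(T/ε) random variables, then for any `α ≥ 0`,
`P(η₂ − η₁ ≥ α) = exp(−εα/T)·(εα/T + 2)/4`. -/
theorem laplace_diff_tail {Ω : Type*} [MeasureSpace Ω]
    [IsProbabilityMeasure (ℙ : Measure Ω)]
    (T : ℤ) (ε : ℝ) (hT : 1 ≤ T) (hε : 0 < ε)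
    (η₁ η₂ : Ω → ℝ) (hη₁ : Measurable η₁) (hη₂ : Measurable η₂)
    (hlaw₁ : Measure.map η₁ ℙ = laplaceMeasure ((T : ℝ) / ε))
    (hlaw₂ : Measure.map η₂ ℙ = laplaceMeasure ((T : ℝ) / ε))
    (hindep : IndepFun η₁ η₂) (α : ℝ) (hα : 0 ≤ α) :
    ℙ {ω | α ≤ η₂ ω - η₁ ω} =
      ENNReal.ofReal (Real.exp (-(ε * α / T)) * (ε * α / T + 2) / 4) := by
  have hT₀ : (0 : ℝ) < T := Int.cast_pos.2 (by omega)
  have hjoint : Measure.map (fun ω => (η₁ ω, η₂ ω)) ℙ =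
      (laplaceMeasure ((T : ℝ) / ε)).prod (laplaceMeasure ((T : ℝ) / ε)) := by
    rw [(indepFun_iff_map_prod_eq_prod_map_map hη₁.aemeasurable hη₂.aemeasurable).1 hindep,
      hlaw₁, hlaw₂]
  have hevent : {ω | α ≤ η₂ ω - η₁ ω} = (fun ω => (η₁ ω, η₂ ω)) ⁻¹' {p | α ≤ p.2 - p.1} := rfl
  rw [hevent, ← Measure.map_apply (hη₁.prodMk hη₂)
      (measurableSet_le measurable_const (by fun_prop)),
    hjoint, laplaceMeasure_prod_setOf_le_sub (div_pos hT₀ hε) hα, div_div_eq_mul_div, mul_comm α]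
end
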